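/- arXiv:1807.05069 — 2 statements merged into one kernel-verified Lean document; each statement's English description precedes it below -/
import Mathlib

section
/- For a simplicial set X and m ≥ 1, 0 < j < m, the Segal map β^m_j of esd(X) equals the 2-Segal-type map of X associated to the triple (2m+1, m−j, m+j+1): under the identifications esd(X)_m = X_{2m+1}, esd(X)_j = X_{2j+1}, esd(X)_{m−j} = X_{2(m−j)+1}, esd(X)_0 = X_1, the maps ε(ι_s) : [2j+1] → [2m+1] and ε(ι_t) : [2(m−j)+1] → [2m+1] are the face maps with images {m−j,...,m+j+1} and {0,...,m−j, m+j+1,...,2m+1} respectively. -/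
/-- The effect on morphisms of the edgewise subdivision functor `ε : Δ → Δ`. -/
def epsMap (n m : ℕ) (f : Fin (n + 1) → Fin (m + 1)) :
    Fin (2 * n + 2) → Fin (2 * m + 2) := fun i =>
  if (i : ℕ) ≤ n then
    ⟨m - (f ⟨n - (i : ℕ), by omega⟩ : ℕ), by
      have := (f ⟨n - (i : ℕ), by omega⟩).isLt; omega⟩
  else
    ⟨m + 1 + (f ⟨(i : ℕ) - n - 1, by have := i.isLt; omega⟩ : ℕ), by
      have := (f ⟨(i : ℕ) - n - 1, by have := i.isLt; omega⟩).isLt; omega⟩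

/-! `ε` reflects a map `f : [n] → [m]` into the lower half `[0, m]` of `[2m+1]` and translates
it into the upper half `[m+1, 2m+1]`. Hence `ε` preserves face maps, and `ε` of the inclusion of
the interval `[k, k+n]` into `[m]` is the face map onto the mirror image `[m-k-n, m-k]` of that
interval together with its translate `[m+1+k, m+1+k+n]`. For `ι_s` and `ι_t` these two blocks
are adjacent, resp. cover the two ends of `[2m+1]`. -/

theorem epsMap_strictMono {n m : ℕ} {f : Fin (n + 1) → Fin (m + 1)} (hf : StrictMono f) :
    StrictMono (epsMap n m f) := by
  intro a b hab
  have hlt : ∀ {p q : ℕ} (hp : p < n + 1) (hq : q < n + 1), p < q →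
      (f ⟨p, hp⟩ : ℕ) < f ⟨q, hq⟩ := fun _ _ hpq => hf (Fin.mk_lt_mk.mpr hpq)
  rw [Fin.lt_def] at hab ⊢
  unfold epsMap
  split_ifs with ha hb hb
  · have := hlt (p := n - b) (q := n - a) (by omega) (by omega) (by omega)
    have := (f ⟨n - a, by omega⟩).isLt
    simp only
    omega
  · simp only
    omega
  · omega
  · simpa using hlt (p := a - n - 1) (q := b - n - 1) (by omega) (by omega) (by omega)

theorem add_le_of_val_eq_add {n m k : ℕ} {f : Fin (n + 1) → Fin (m + 1)}
    (hf : ∀ i, (f i : ℕ) = i + k) : n + k ≤ m := by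
  have := (f (Fin.last n)).isLt
  rw [hf, Fin.val_last] at this
  omega

theorem strictMono_of_val_eq_add {n m k : ℕ} {f : Fin (n + 1) → Fin (m + 1)}
    (hf : ∀ i, (f i : ℕ) = i + k) : StrictMono f := fun a b hab => by
  rw [Fin.lt_def, hf, hf]
  exact Nat.add_lt_add_right hab k

theorem val_epsMap_of_val_eq_add {n m k : ℕ} {f : Fin (n + 1) → Fin (m + 1)}
    (hf : ∀ i, (f i : ℕ) = i + k) (t : Fin (2 * n + 2)) :
    (epsMap n m f t : ℕ) = if (t : ℕ) ≤ n then t + (m - n - k) else t + (m - n + k) := by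
  have hnk := add_le_of_val_eq_add hf
  unfold epsMap
  split_ifs <;> simp only [hf] <;> omega

theorem range_val_epsMap_of_val_eq_add {n m k : ℕ} {f : Fin (n + 1) → Fin (m + 1)}
    (hf : ∀ i, (f i : ℕ) = i + k) :
    Set.range (fun t => (epsMap n m f t : ℕ)) =
      Set.Icc (m - k - n) (m - k) ∪ Set.Icc (m + 1 + k) (m + 1 + k + n) := by
  have hnk := add_le_of_val_eq_add hf
  ext x
  simp only [Set.mem_range, Set.mem_union, Set.mem_Icc, val_epsMap_of_val_eq_add hf]
  constructor
  · rintro ⟨t, rfl⟩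
    have := t.isLt
    split_ifs <;> omega
  · rintro (hx | hx)
    · exact ⟨⟨x - (m - k - n), by omega⟩, by simp only; split_ifs <;> omega⟩
    · exact ⟨⟨x - (m - n + k), by omega⟩, by simp only; split_ifs <;> omega⟩

/-- For `0 < j < m`, `ε(ι_s) : [2j+1] → [2m+1]` and `ε(ι_t) : [2(m-j)+1] → [2m+1]`
(for `ι_s : [j] → [m], i ↦ i` and `ι_t : [m-j] → [m], i ↦ i+j`) are the face
maps (injective, order-preserving) with images `{m-j, …, m+j+1}` and
`{0,…,m-j} ∪ {m+j+1,…,2m+1}` respectively; in particular these exhibit the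
Segal map `β^m_j` of `esd(X)` as the 2-Segal map of `X` for `(2m+1, m-j, m+j+1)`. -/
theorem eps_of_segal_inclusions_are_faces (m j : ℕ) (hj : j < m) :
    let ιs : Fin (j + 1) → Fin (m + 1) := fun t => ⟨(t : ℕ), by have := t.isLt; omega⟩
    let ιt : Fin (m - j + 1) → Fin (m + 1) := fun t =>
      ⟨(t : ℕ) + j, by have := t.isLt; omega⟩
    StrictMono (epsMap j m ιs) ∧
    (Set.range (fun t => ((epsMap j m ιs t : Fin (2 * m + 2)) : ℕ)) =
      Set.Icc (m - j) (m + j + 1)) ∧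
    StrictMono (epsMap (m - j) m ιt) ∧
    (Set.range (fun t => ((epsMap (m - j) m ιt t : Fin (2 * m + 2)) : ℕ)) =
      Set.Iic (m - j) ∪ Set.Icc (m + j + 1) (2 * m + 1)) ∧
    -- explicit formulas: `ε(ι_s)(t) = t + (m-j)` and
    -- `ε(ι_t)(t) = t` for `t ≤ m-j`, `= t + 2j` for `t > m-j`
    (∀ t : Fin (2 * j + 2), ((epsMap j m ιs t : Fin (2 * m + 2)) : ℕ) = (t : ℕ) + (m - j)) ∧
    (∀ t : Fin (2 * (m - j) + 2), ((epsMap (m - j) m ιt t : Fin (2 * m + 2)) : ℕ) =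
      if (t : ℕ) ≤ m - j then (t : ℕ) else (t : ℕ) + 2 * j) := by
  intro ιs ιt
  have hιs : ∀ t, (ιs t : ℕ) = t + 0 := fun _ => rfl
  have hιt : ∀ t, (ιt t : ℕ) = t + j := fun _ => rfl
  refine ⟨epsMap_strictMono (strictMono_of_val_eq_add hιs), ?_,
    epsMap_strictMono (strictMono_of_val_eq_add hιt), ?_, fun t => ?_, fun t => ?_⟩
  · rw [range_val_epsMap_of_val_eq_add hιs]
    ext x
    simp only [Set.mem_union, Set.mem_Icc]
    omega
  · rw [range_val_epsMap_of_val_eq_add hιt]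
    ext x
    simp only [Set.mem_union, Set.mem_Icc, Set.mem_Iic]
    omega
  · rw [val_epsMap_of_val_eq_add hιs]
    split_ifs <;> omega
  · rw [val_epsMap_of_val_eq_add hιt]
    split_ifs <;> omega
end

section
/- For every k ≥ 0, the edgewise subdivision esd(Δ[k]) of the standard k-simplex has exactly 2^k nondegenerate k-simplices. -/
/-!
A `k`-simplex `f : [2k+1] → [k]` of `esd(Δ[k])` factors through `ε(σᵢ)` exactly when it is
constant on the two edges `k-1-i → k-i` and `k+1+i → k+2+i` that `ε(σᵢ)` collapses. For a
nondegenerate `f`, the function `j ↦ f(k+1+j) - f(k-j)` therefore increases strictly on `[0, k]`,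
from `f(k+1) - f(k) ≥ 0` to `f(2k+1) - f(0) ≤ k`, so it is the identity. Hence `f(0) = 0`, `f` is
constant on the middle edge, and each of the `k` pairs of edges carries exactly one jump, of
height one; the nondegenerate `f` are parametrised by the `2^k` choices of which edge jumps.
-/

/-- `ε(σᵢ) : [2k+1] → [2k-1]`, the image under the edgewise subdivision functor
`ε` of the degeneracy `σᵢ : [k] → [k-1]` (which hits `i` twice); the `i`-th
degeneracy of `esd(X)` is induced by this map. -/
def esdDegen (k : ℕ) (i : Fin k) : Fin (2 * k + 2) → Fin (2 * k) := fun t =>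
  if (t : ℕ) ≤ k then
    ⟨k - 1 - (if k - (t : ℕ) ≤ (i : ℕ) then k - (t : ℕ) else k - (t : ℕ) - 1), by
      have := i.isLt; omega⟩
  else
    ⟨k + (if (t : ℕ) - k - 1 ≤ (i : ℕ) then (t : ℕ) - k - 1 else (t : ℕ) - k - 2), by
      have := i.isLt; have := t.isLt; split <;> omega⟩

open Finset

theorem OrderHom.exists_eq_comp_iff_of_rightInverse {α β γ : Type*} [Preorder α] [Preorder β]
    [Preorder γ] (f : α →o γ) {s : α → β} (r : β →o α) (hsr : Function.RightInverse r s) :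
    (∃ g : β →o γ, ∀ t, f t = g (s t)) ↔ ∀ t, f t = f (r (s t)) := by
  constructor
  · rintro ⟨g, hg⟩ t
    rw [hg, hg, hsr]
  · exact fun h => ⟨f.comp r, h⟩

def OrderHom.natExtend {n m : ℕ} (f : Fin (n + 1) →o Fin (m + 1)) : ℕ →o ℕ where
  toFun p := f (Fin.clamp p n)
  monotone' a b hab := f.monotone (by simp only [Fin.le_def, Fin.coe_clamp]; omega)

namespace OrderHom

variable {n m : ℕ} (f : Fin (n + 1) →o Fin (m + 1))

theorem natExtend_of_le {p : ℕ} (hp : p ≤ n) : f.natExtend p = f ⟨p, by omega⟩ := by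
  simp only [natExtend, coe_mk, Fin.clamp, Nat.min_eq_left hp]

theorem natExtend_coe (t : Fin (n + 1)) : f.natExtend t = f t :=
  natExtend_of_le f (Nat.le_of_lt_succ t.isLt)

theorem natExtend_le (p : ℕ) : f.natExtend p ≤ m :=
  Nat.le_of_lt_succ (f _).isLt

theorem ext_of_natExtend {g : Fin (n + 1) →o Fin (m + 1)}
    (h : ∀ p ≤ n, f.natExtend p = g.natExtend p) : f = g := by
  ext t
  rw [← natExtend_coe, ← natExtend_coe]
  exact h t (Nat.le_of_lt_succ t.isLt)

end OrderHom

section EsdDegen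

variable (k : ℕ) (i : Fin k)

theorem esdDegen_val (t : Fin (2 * k + 2)) :
    (esdDegen k i t : ℕ) =
      t - (if k - i ≤ (t : ℕ) then 1 else 0) - (if k + 2 + i ≤ (t : ℕ) then 1 else 0) := by
  have := i.isLt
  unfold esdDegen
  split <;> simp only <;> split_ifs <;> omega

/-- `ε(δᵢ)`, a section of `esdDegen k i` since `σᵢ ∘ δᵢ = id`. -/
def esdFace : Fin (2 * k) →o Fin (2 * k + 2) where
  toFun v := ⟨v + (if k - i ≤ (v : ℕ) then 1 else 0) + (if k + i ≤ (v : ℕ) then 1 else 0), by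
    have := v.isLt; split_ifs <;> omega⟩
  monotone' a b hab := by
    rw [Fin.le_def] at hab ⊢
    have := i.isLt
    dsimp only
    split_ifs <;> omega

theorem esdFace_val (v : Fin (2 * k)) :
    (esdFace k i v : ℕ) =
      v + (if k - i ≤ (v : ℕ) then 1 else 0) + (if k + i ≤ (v : ℕ) then 1 else 0) :=
  rfl

theorem esdDegen_esdFace : Function.RightInverse (esdFace k i) (esdDegen k i) := by
  intro v
  have := i.isLt
  ext
  rw [esdDegen_val, esdFace_val]
  split_ifs <;> omega

theorem esdFace_esdDegen_val (t : Fin (2 * k + 2)) :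
    (esdFace k i (esdDegen k i t) : ℕ) =
      if (t : ℕ) = k - i then k - 1 - i else if (t : ℕ) = k + 1 + i then k + 2 + i else t := by
  have := i.isLt
  rw [esdFace_val, esdDegen_val]
  split_ifs <;> omega

end EsdDegen

theorem exists_eq_comp_esdDegen_iff {k : ℕ} (i : Fin k) (f : Fin (2 * k + 2) →o Fin (k + 1)) :
    (∃ g : Fin (2 * k) →o Fin (k + 1), ∀ t, f t = g (esdDegen k i t)) ↔
      f.natExtend (k - 1 - i) = f.natExtend (k - i) ∧
        f.natExtend (k + 1 + i) = f.natExtend (k + 2 + i) := by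
  have hi := i.isLt
  have hnat : ∀ t, f t = f (esdFace k i (esdDegen k i t)) ↔
      f.natExtend t = f.natExtend (esdFace k i (esdDegen k i t)) := by
    intro t
    rw [OrderHom.natExtend_coe, OrderHom.natExtend_coe, Fin.val_inj]
  simp only [OrderHom.exists_eq_comp_iff_of_rightInverse f _ (esdDegen_esdFace k i), hnat,
    esdFace_esdDegen_val]
  constructor
  · intro h
    have hl := h ⟨k - i, by omega⟩
    have hr := h ⟨k + 1 + i, by omega⟩
    rw [if_pos rfl] at hl
    rw [if_neg (show k + 1 + (i : ℕ) ≠ k - i by omega), if_pos rfl] at hr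
    exact ⟨hl.symm, hr⟩
  · rintro ⟨hl, hr⟩ t
    split_ifs with h₁ h₂
    · rw [h₁, hl]
    · rw [h₂, hr]
    · rfl

def EsdNondegenerate (k : ℕ) (F : ℕ → ℕ) : Prop :=
  ∀ i < k, F (k - 1 - i) < F (k - i) ∨ F (k + 1 + i) < F (k + 2 + i)

def esdCode (k : ℕ) (F : ℕ → ℕ) : Fin k → Bool := fun i => decide (F (k - 1 - i) < F (k - i))

theorem not_exists_eq_comp_esdDegen_iff {k : ℕ} (f : Fin (2 * k + 2) →o Fin (k + 1)) :
    (¬ ∃ (i : Fin k) (g : Fin (2 * k) →o Fin (k + 1)), ∀ t, f t = g (esdDegen k i t)) ↔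
      EsdNondegenerate k f.natExtend := by
  simp only [exists_eq_comp_esdDegen_iff, not_exists, not_and_or, EsdNondegenerate]
  refine ⟨fun h i hi => ?_, fun h i => ?_⟩
  · have hl := f.natExtend.monotone (show k - 1 - i ≤ k - i by omega)
    have hr := f.natExtend.monotone (show k + 1 + i ≤ k + 2 + i by omega)
    rcases h ⟨i, hi⟩ with h | h
    · exact .inl (lt_of_le_of_ne hl h)
    · exact .inr (lt_of_le_of_ne hr h)
  · exact (h i i.isLt).imp ne_of_lt ne_of_lt

theorem eq_self_of_add_one_le_of_le {u : ℕ → ℕ} {k : ℕ} (hu : ∀ i < k, u i + 1 ≤ u (i + 1))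
    (hk : u k ≤ k) {i : ℕ} (hi : i ≤ k) : u i = i := by
  have lower : ∀ j ≤ k, j ≤ u j := by
    intro j hj
    induction j with
    | zero => exact Nat.zero_le _
    | succ j ih => have := hu j (by omega); have := ih (by omega); omega
  have upper : ∀ j ≤ k, u (k - j) + j ≤ u k := by
    intro j hj
    induction j with
    | zero => rfl
    | succ j ih =>
      have := hu (k - (j + 1)) (by omega)
      rw [show k - (j + 1) + 1 = k - j by omega] at this
      have := ih (by omega); omega
  have := upper (k - i) (by omega)
  rw [Nat.sub_sub_self hi] at this
  have := lower i hi
  omega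

namespace EsdNondegenerate

variable {k : ℕ} {F : ℕ → ℕ}

theorem jumps_tight (h : EsdNondegenerate k F) (hF : Monotone F) (hk : F (2 * k + 1) ≤ k) :
    F 0 = 0 ∧ F (k + 1) = F k ∧
      ∀ i < k, F (k - i) - F (k - 1 - i) + (F (k + 2 + i) - F (k + 1 + i)) = 1 := by
  have hu : ∀ i < k, F (k + 1 + i) - F (k - i) + 1 ≤ F (k + 1 + (i + 1)) - F (k - (i + 1)) := by
    intro i hi
    rw [show k + 1 + (i + 1) = k + 2 + i by omega, show k - (i + 1) = k - 1 - i by omega]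
    have := hF (show k - 1 - i ≤ k - i by omega)
    have := hF (show k - i ≤ k + 1 + i by omega)
    have := hF (show k + 1 + i ≤ k + 2 + i by omega)
    rcases h i hi with h | h <;> omega
  have hid : ∀ i ≤ k, F (k + 1 + i) - F (k - i) = i :=
    fun i => eq_self_of_add_one_le_of_le (u := fun j => F (k + 1 + j) - F (k - j)) hu
      (by simp only [show k + 1 + k = 2 * k + 1 by omega, Nat.sub_self]; omega)
  have hid_k := hid k le_rfl
  have hid_0 := hid 0 (Nat.zero_le k)
  rw [show k + 1 + k = 2 * k + 1 by omega, Nat.sub_self] at hid_k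
  rw [add_zero, Nat.sub_zero] at hid_0
  have h0 := hF (Nat.zero_le (2 * k + 1))
  have hmid := hF (show k ≤ k + 1 by omega)
  refine ⟨by omega, by omega, fun i hi => ?_⟩
  have hid_i := hid i hi.le
  have hid_succ := hid (i + 1) hi
  rw [show k + 1 + (i + 1) = k + 2 + i by omega, show k - (i + 1) = k - 1 - i by omega] at hid_succ
  have := hF (show k - 1 - i ≤ k - i by omega)
  have := hF (show k - i ≤ k + 1 + i by omega)
  have := hF (show k + 1 + i ≤ k + 2 + i by omega)
  omega

theorem eq_of_esdCode_eq {G : ℕ → ℕ} (hFn : EsdNondegenerate k F) (hF : Monotone F)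
    (hFk : F (2 * k + 1) ≤ k) (hGn : EsdNondegenerate k G) (hG : Monotone G)
    (hGk : G (2 * k + 1) ≤ k) (hFG : esdCode k F = esdCode k G) :
    ∀ p ≤ 2 * k + 1, F p = G p := by
  have hcode : ∀ i < k, (F (k - 1 - i) < F (k - i) ↔ G (k - 1 - i) < G (k - i)) := fun i hi => by
    simpa only [esdCode, decide_eq_decide] using congrFun hFG ⟨i, hi⟩
  obtain ⟨hF0, hFmid, hFpair⟩ := hFn.jumps_tight hF hFk
  obtain ⟨hG0, hGmid, hGpair⟩ := hGn.jumps_tight hG hGk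
  intro p hp
  induction p with
  | zero => rw [hF0, hG0]
  | succ p ih =>
    have hFG := ih (by omega)
    rcases lt_trichotomy p k with hpk | hpk | hpk
    · obtain ⟨i, hi, rfl⟩ : ∃ i < k, p = k - 1 - i := ⟨k - 1 - p, by omega, by omega⟩
      rw [show k - 1 - i + 1 = k - i by omega]
      have := hFpair i hi; have := hGpair i hi
      have := hF (show k - 1 - i ≤ k - i by omega)
      have := hG (show k - 1 - i ≤ k - i by omega)
      by_cases hlt : F (k - 1 - i) < F (k - i)
      · have := (hcode i hi).1 hlt; omega
      · have := mt (hcode i hi).2 hlt; omega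
    · rw [hpk, hFmid, hGmid, ← hpk, hFG]
    · obtain ⟨i, hi, rfl⟩ : ∃ i < k, p = k + 1 + i := ⟨p - k - 1, by omega, by omega⟩
      rw [show k + 1 + i + 1 = k + 2 + i by omega]
      have := hFpair i hi; have := hGpair i hi
      have := hF (show k - 1 - i ≤ k - i by omega)
      have := hG (show k - 1 - i ≤ k - i by omega)
      have := hF (show k + 1 + i ≤ k + 2 + i by omega)
      have := hG (show k + 1 + i ≤ k + 2 + i by omega)
      by_cases hlt : F (k - 1 - i) < F (k - i)
      · have := (hcode i hi).1 hlt; omega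
      · have := mt (hcode i hi).2 hlt; omega

end EsdNondegenerate

section ThresholdCount

variable {ι : Type*} [Fintype ι] (τ : ι → ℕ)

def thresholdCount (t : ℕ) : ℕ := #{i | τ i ≤ t}

theorem thresholdCount_mono : Monotone (thresholdCount τ) := fun _ _ hst =>
  card_le_card (monotone_filter_right _ fun _ _ h => h.trans hst)

theorem thresholdCount_le_card (t : ℕ) : thresholdCount τ t ≤ Fintype.card ι :=
  card_filter_le _ _

theorem thresholdCount_succ (t : ℕ) :
    thresholdCount τ (t + 1) = thresholdCount τ t + #{i | τ i = t + 1} := by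
  classical
  rw [thresholdCount, thresholdCount,
    ← card_union_of_disjoint (disjoint_filter.2 fun _ _ h h' => by omega)]
  congr 1
  ext i
  simp only [mem_filter, mem_univ, true_and, mem_union]
  omega

theorem thresholdCount_lt_succ_iff (t : ℕ) :
    thresholdCount τ t < thresholdCount τ (t + 1) ↔ ∃ i, τ i = t + 1 := by
  rw [thresholdCount_succ, Nat.lt_add_right_iff_pos, card_pos, filter_nonempty_iff]
  simp only [mem_univ, true_and]

end ThresholdCount

section EsdCode

variable {k : ℕ}

/-- The position just after the unique jump of pair `i` of the simplex with code `c`: the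
left edge `k - 1 - i → k - i` if `c i`, the right edge `k + 1 + i → k + 2 + i` otherwise. -/
def esdJumpPos (c : Fin k → Bool) (i : Fin k) : ℕ := if c i then k - i else k + 2 + i

theorem exists_esdJumpPos_eq_iff (c : Fin k → Bool) (i : Fin k) :
    (∃ j, esdJumpPos c j = k - i) ↔ c i := by
  constructor
  · rintro ⟨j, hj⟩
    unfold esdJumpPos at hj
    split_ifs at hj with hc
    · rwa [Fin.ext (by omega : (j : ℕ) = i)] at hc
    · omega
  · exact fun hc => ⟨i, if_pos hc⟩

def esdOfCode (c : Fin k → Bool) : Fin (2 * k + 2) →o Fin (k + 1) where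
  toFun t := ⟨thresholdCount (esdJumpPos c) t, by
    have := thresholdCount_le_card (esdJumpPos c) t
    rw [Fintype.card_fin] at this
    omega⟩
  monotone' _ _ hst := Fin.mk_le_mk.2 (thresholdCount_mono _ hst)

theorem natExtend_esdOfCode (c : Fin k → Bool) {p : ℕ} (hp : p ≤ 2 * k + 1) :
    (esdOfCode c).natExtend p = thresholdCount (esdJumpPos c) p := by
  rw [OrderHom.natExtend_of_le _ hp]
  rfl

theorem esdOfCode_lt_succ_iff (c : Fin k → Bool) {p : ℕ} (hp : p < 2 * k + 1) :
    (esdOfCode c).natExtend p < (esdOfCode c).natExtend (p + 1) ↔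
      ∃ i, esdJumpPos c i = p + 1 := by
  rw [natExtend_esdOfCode c hp.le, natExtend_esdOfCode c hp, thresholdCount_lt_succ_iff]

theorem esdCode_esdOfCode (c : Fin k → Bool) : esdCode k (esdOfCode c).natExtend = c := by
  funext i
  have := i.isLt
  have h : (esdOfCode c).natExtend (k - 1 - i) < (esdOfCode c).natExtend (k - i) ↔ c i := by
    rw [← exists_esdJumpPos_eq_iff c i, show k - (i : ℕ) = k - 1 - i + 1 by omega]
    exact esdOfCode_lt_succ_iff c (by omega)
  simp only [esdCode, h, Bool.decide_eq_true]

theorem esdNondegenerate_esdOfCode (c : Fin k → Bool) :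
    EsdNondegenerate k (esdOfCode c).natExtend := by
  intro i hi
  by_cases hc : c ⟨i, hi⟩
  · left
    rw [show k - i = k - 1 - i + 1 by omega, esdOfCode_lt_succ_iff c (by omega)]
    exact ⟨⟨i, hi⟩, by rw [esdJumpPos, if_pos hc, Fin.val_mk]; omega⟩
  · right
    rw [show k + 2 + i = k + 1 + i + 1 by omega, esdOfCode_lt_succ_iff c (by omega)]
    exact ⟨⟨i, hi⟩, by rw [esdJumpPos, if_neg hc, Fin.val_mk]; omega⟩

end EsdCode

def esdNondegenerateEquiv (k : ℕ) :
    {f : Fin (2 * k + 2) →o Fin (k + 1) // EsdNondegenerate k f.natExtend} ≃ (Fin k → Bool) where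
  toFun f := esdCode k f.1.natExtend
  invFun c := ⟨esdOfCode c, esdNondegenerate_esdOfCode c⟩
  left_inv := by
    rintro ⟨f, hf⟩
    exact Subtype.ext <| OrderHom.ext_of_natExtend _ <|
      (esdNondegenerate_esdOfCode _).eq_of_esdCode_eq (OrderHom.monotone _)
        (OrderHom.natExtend_le _ _) hf (OrderHom.monotone _) (OrderHom.natExtend_le _ _)
        (esdCode_esdOfCode _)
  right_inv := esdCode_esdOfCode

/-- The edgewise subdivision of the standard `k`-simplex has exactly `2^k`
nondegenerate `k`-simplices: a `k`-simplex of `esd(Δ[k])` is an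
order-preserving map `[2k+1] → [k]`, and it is nondegenerate when it does not
factor through any `ε(σᵢ)`, i.e. is not in the image of any degeneracy map of
`esd(Δ[k])`. -/
theorem esd_standard_simplex_nondegenerate_card (k : ℕ) :
    Nat.card { f : Fin (2 * k + 2) →o Fin (k + 1) //
      ¬ ∃ (i : Fin k) (g : Fin (2 * k) →o Fin (k + 1)),
        ∀ t, f t = g (esdDegen k i t) } = 2 ^ k := by
  rw [Nat.card_congr ((Equiv.subtypeEquivRight not_exists_eq_comp_esdDegen_iff).trans
    (esdNondegenerateEquiv k)), Nat.card_eq_fintype_card, Fintype.card_fun, Fintype.card_bool,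
    Fintype.card_fin]
end
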